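/- Let k ≥ 3 be odd and t = (k−1)/2. The graph obtained as the join of a clique on t vertices with an independent set of arbitrary size m contains no cycle C_k and no linear forest with k edges. -/

import Mathlib

open SimpleGraph

/-- `H` is contained in `G` as a subgraph: there is an injective map preserving adjacency. -/
def Contains {α β : Type*} (G : SimpleGraph α) (H : SimpleGraph β) : Prop :=
  ∃ f : β ↪ α, ∀ a b, H.Adj a b → G.Adj (f a) (f b)

/-- The join of two graphs: all cross edges are added. -/
def graphJoin {α β : Type*} (G : SimpleGraph α) (H : SimpleGraph β) : SimpleGraph (α ⊕ β) where
  Adj x y :=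
    match x, y with
    | Sum.inl a, Sum.inl b => G.Adj a b
    | Sum.inl _, Sum.inr _ => True
    | Sum.inr _, Sum.inl _ => True
    | Sum.inr a, Sum.inr b => H.Adj a b
  symm := by
    constructor
    rintro (a|a) (b|b) h
    · exact G.adj_symm h
    · trivial
    · trivial
    · exact H.adj_symm h
  loopless := by
    constructor
    rintro (a|a) h
    · exact G.ne_of_adj h rfl
    · exact H.ne_of_adj h rfl

/-- The join of a clique on `t` vertices with an independent set of `m` vertices. -/
def cliqueIndepJoin (t m : ℕ) : SimpleGraph (Fin t ⊕ Fin m) :=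
  graphJoin (completeGraph (Fin t)) (⊥ : SimpleGraph (Fin m))
/-- A linear forest: an acyclic graph in which every vertex has degree at most 2,
i.e. a vertex-disjoint union of paths. -/
def IsLinearForest {β : Type*} (F : SimpleGraph β) : Prop :=
  F.IsAcyclic ∧ ∀ v, (F.neighborSet v).ncard ≤ 2

/-
Every edge of the join `K_t + \bar K_m` meets the clique, so the `t` clique vertices form a
vertex cover.  A graph of maximum degree at most 2 with a vertex cover of size `t` has at most
`2t ≤ k - 1` edges, whereas `C_k` and a linear forest with `k` edges both have maximum
degree at most 2 and `k` edges.
-/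

open Finset

namespace SimpleGraph

theorem IsVertexCover.card_edgeFinset_le {V : Type*} [Fintype V] [DecidableEq V]
    {G : SimpleGraph V} [DecidableRel G.Adj] {c : Finset V} (hc : G.IsVertexCover c) {d : ℕ}
    (hdeg : ∀ v ∈ c, G.degree v ≤ d) : #G.edgeFinset ≤ d * #c := by
  have hcover : G.edgeFinset ⊆ c.biUnion fun v => G.incidenceFinset v := by
    intro e he
    induction e using Sym2.ind with
    | _ v w =>
      have hvw : G.Adj v w := by simpa using he
      simp only [mem_biUnion, mem_incidenceFinset, mk'_mem_incidenceSet_iff]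
      rcases hc hvw with hv | hw
      · exact ⟨v, hv, hvw, Or.inl rfl⟩
      · exact ⟨w, hw, hvw, Or.inr rfl⟩
  calc #G.edgeFinset ≤ #(c.biUnion fun v => G.incidenceFinset v) := card_le_card hcover
    _ ≤ ∑ v ∈ c, #(G.incidenceFinset v) := card_biUnion_le
    _ ≤ ∑ _v ∈ c, d :=
      sum_le_sum fun v hv => (card_incidenceFinset_eq_degree G v).trans_le (hdeg v hv)
    _ = d * #c := by rw [sum_const, smul_eq_mul, mul_comm]

theorem card_edgeFinset_cycleGraph (n : ℕ) : #(cycleGraph (n + 3)).edgeFinset = n + 3 := by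
  have hsum := (cycleGraph (n + 3)).sum_degrees_eq_twice_card_edges
  simp only [cycleGraph_degree_three_le, sum_const, card_univ, Fintype.card_fin,
    smul_eq_mul] at hsum
  omega

end SimpleGraph

theorem Contains.card_edgeFinset_le_of_graphJoin_bot {α β γ : Type*} [Fintype α] [Fintype β]
    [DecidableEq β] {G : SimpleGraph α} {H : SimpleGraph β} [DecidableRel H.Adj]
    (hH : Contains (graphJoin G (⊥ : SimpleGraph γ)) H) {d : ℕ}
    (hdeg : ∀ v, H.degree v ≤ d) : #H.edgeFinset ≤ d * Fintype.card α := by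
  obtain ⟨f, hf⟩ := hH
  set c := univ.filter fun b => (f b).isLeft
  have hc : H.IsVertexCover c := by
    intro v w hvw
    have hjoin := hf v w hvw
    simp only [c, coe_filter, mem_univ, true_and, Set.mem_ofPred_eq]
    rcases hfv : f v with a | a <;> rcases hfw : f w with b | b <;> simp_all [graphJoin]
  have hcard : #c ≤ Fintype.card α := by
    have hleft : c.map f ⊆ univ.map Function.Embedding.inl := fun x hx => by
      obtain ⟨b, hb, rfl⟩ := mem_map.mp hx
      obtain ⟨a, ha⟩ := Sum.isLeft_iff.mp (mem_filter.mp hb).2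
      exact mem_map.mpr ⟨a, mem_univ a, ha.symm⟩
    simpa using card_le_card hleft
  calc #H.edgeFinset ≤ d * #c := hc.card_edgeFinset_le fun v _ => hdeg v
    _ ≤ d * Fintype.card α := Nat.mul_le_mul_left d hcard

theorem stmt_11_general (k t m : ℕ) (hk : 3 ≤ k) (ht : t = (k - 1) / 2) :
    ¬ Contains (cliqueIndepJoin t m) (SimpleGraph.cycleGraph k) ∧
    ¬ ∃ s : Set (Sym2 (Fin t ⊕ Fin m)), s ⊆ (cliqueIndepJoin t m).edgeSet ∧
        s.ncard = k ∧ IsLinearForest (SimpleGraph.fromEdgeSet s) := by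
  classical
  have few_edges {β : Type} [Fintype β] [DecidableEq β] {H : SimpleGraph β} [DecidableRel H.Adj]
      (hH : Contains (cliqueIndepJoin t m) H) (hdeg : ∀ v, H.degree v ≤ 2) :
      #H.edgeFinset < k := by
    have := hH.card_edgeFinset_le_of_graphJoin_bot hdeg
    rw [Fintype.card_fin] at this
    omega
  constructor
  · intro hC
    obtain ⟨n, rfl⟩ : ∃ n, k = n + 3 := ⟨k - 3, by omega⟩
    simpa [card_edgeFinset_cycleGraph] using
      few_edges hC fun _ => cycleGraph_degree_three_le.le
  · rintro ⟨s, hs, rfl, -, hdeg⟩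
    have hE : (fromEdgeSet s).edgeSet = s := by
      rw [edgeSet_fromEdgeSet]
      exact sdiff_eq_left.mpr <| Set.disjoint_left.mpr fun _ hes =>
        (cliqueIndepJoin t m).not_isDiag_of_mem_edgeSet (hs hes)
    have hC : Contains (cliqueIndepJoin t m) (fromEdgeSet s) :=
      ⟨Function.Embedding.refl _, fun a b hab => hs (hE ▸ hab : s(a, b) ∈ s)⟩
    have hdeg' : ∀ v, (fromEdgeSet s).degree v ≤ 2 := fun v =>
      (Set.ncard_eq_toFinset_card' _).symm.trans_le (hdeg v)
    have := few_edges hC hdeg'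
    rw [← Set.ncard_coe_finset, coe_edgeFinset, hE] at this
    exact this.false

/-- for odd `k ≥ 3` and `t = (k-1)/2`, the join of a clique on `t` vertices
with an independent set of any size `m` contains no cycle `C_k` and no linear forest with
`k` edges. -/
theorem stmt_11 (k t m : ℕ) (hk : 3 ≤ k) (hodd : Odd k) (ht : t = (k - 1) / 2) :
    ¬ Contains (cliqueIndepJoin t m) (SimpleGraph.cycleGraph k) ∧
    ¬ ∃ s : Set (Sym2 (Fin t ⊕ Fin m)), s ⊆ (cliqueIndepJoin t m).edgeSet ∧
        s.ncard = k ∧ IsLinearForest (SimpleGraph.fromEdgeSet s) :=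
  stmt_11_general k t m hk ht
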